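/- arXiv:1307.0095 — 3 statements merged into one kernel-verified Lean document; each statement's English description precedes it below -/
import Mathlib

section
/- The braiding (Yang–Baxter-type) relation V₁(u,a,b)·V₂(b,c,d)·V₁(u,b,e) = V₂(a,c,b')·V₁(u,a,e)·V₂(e,b',d) holds in GL₃ if and only if the octahedron condition b·b' = e·c + a·d is satisfied, for all u, a, c, d, e with b, b', and the relevant entries invertible. -/
open Matrix

noncomputable def V1 {K : Type*} [Field K] (a b c : K) : Matrix (Fin 3) (Fin 3) K :=
  !![b * c⁻¹, a * c⁻¹, 0; 0, 1, 0; 0, 0, 1]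

noncomputable def V2 {K : Type*} [Field K] (a b c : K) : Matrix (Fin 3) (Fin 3) K :=
  !![1, 0, 0; 0, b * c⁻¹, a * c⁻¹; 0, 0, 1]

theorem stmt4 {K : Type*} [Field K] (u a b b' c d e : K)
    (ha : a ≠ 0) (hb : b ≠ 0) (hb' : b' ≠ 0) (hd : d ≠ 0) (he : e ≠ 0) :
    V1 u a b * V2 b c d * V1 u b e = V2 a c b' * V1 u a e * V2 e b' d ↔
      b * b' = e * c + a * d := by
  constructor
  · intro h
    have h23 := congrFun (congrFun h 1) 2
    simp [V1, V2, Matrix.mul_apply, Fin.sum_univ_succ] at h23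
    field_simp at h23
    have h2 : (b * b' - (e * c + a * d)) * (b' * d) = 0 := by linear_combination (b' * d) * h23
    rcases mul_eq_zero.mp h2 with h3 | h3
    · exact sub_eq_zero.mp h3
    · exact absurd h3 (mul_ne_zero hb' hd)
  · intro h
    ext i j
    fin_cases i <;> fin_cases j <;>
      simp [V1, V2, Matrix.mul_apply, Fin.sum_univ_succ] <;>
      field_simp <;>
      first
        | ring1
        | linear_combination (-(u * b * d * e)) * h
        | linear_combination b' * d * h
        | linear_combination (-(b' * d)) * h
        | linear_combination (-u) * h
        | linear_combination h
end

section
/- Any solution T of the A₁ T-system T(j,k+1)·T(j,k−1) = T(j+1,k)·T(j−1,k) + 1 (for j+k even, all values nonzero) satisfies the conservation property: the quantity c(j,k) := (T(j−1,k+1) + T(j+1,k−1)) / T(j,k) depends only on j+k, i.e., c(j,k) = c(j+1,k+1) whenever both are defined. -/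
theorem stmt6 {K : Type*} [Field K] (T : ℤ → ℤ → K)
    (hnz : ∀ j k : ℤ, T j k ≠ 0)
    (hT : ∀ j k : ℤ, T j (k + 1) * T j (k - 1) = T (j + 1) k * T (j - 1) k + 1)
    (c : ℤ → ℤ → K)
    (hc : ∀ j k : ℤ, c j k = (T (j - 1) (k + 1) + T (j + 1) (k - 1)) * (T j k)⁻¹) :
    ∀ j k : ℤ, c j k = c (j + 1) (k + 1) := by
  intro j k
  rw [hc, hc]
  have h1 := hT j (k + 1)
  have h2 := hT (j + 1) k
  have e1 : k + 1 + 1 = k + 2 := by ring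
  have e2 : k + 1 - 1 = k := by ring
  have e3 : j + 1 + 1 = j + 2 := by ring
  have e4 : j + 1 - 1 = j := by ring
  rw [e1, e2] at h1
  rw [e3, e4] at h2
  rw [e1, e2, e3, e4]
  have n1 := hnz j k
  have n2 := hnz (j + 1) (k + 1)
  field_simp
  linear_combination h2 - h1
end

section
/- Any solution T of the A₁ T-system T(j,k+1)·T(j,k−1) = T(j+1,k)·T(j−1,k) + 1 (with all values nonzero) satisfies the second conservation property: d(j,k) := (T(j−1,k−1) + T(j+1,k+1)) / T(j,k) satisfies d(j,k) = d(j+1,k−1) whenever both are defined. -/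
theorem stmt7 {K : Type*} [Field K] (T : ℤ → ℤ → K)
    (hnz : ∀ j k : ℤ, T j k ≠ 0)
    (hT : ∀ j k : ℤ, T j (k + 1) * T j (k - 1) = T (j + 1) k * T (j - 1) k + 1)
    (d : ℤ → ℤ → K)
    (hd : ∀ j k : ℤ, d j k = (T (j - 1) (k - 1) + T (j + 1) (k + 1)) * (T j k)⁻¹) :
    ∀ j k : ℤ, d j k = d (j + 1) (k - 1) := by
  intro j k
  have h1 : T j k * T j (k - 2) = T (j + 1) (k - 1) * T (j - 1) (k - 1) + 1 := by
    have := hT j (k - 1)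
    have e1 : k - 1 + 1 = k := by ring
    have e2 : k - 1 - 1 = k - 2 := by ring
    rwa [e1, e2] at this
  have h2 : T (j + 1) (k + 1) * T (j + 1) (k - 1) = T (j + 2) k * T j k + 1 := by
    have := hT (j + 1) k
    have e1 : j + 1 + 1 = j + 2 := by ring
    have e2 : j + 1 - 1 = j := by ring
    rwa [e1, e2] at this
  rw [hd, hd]
  have e3 : j + 1 - 1 = j := by ring
  have e4 : k - 1 - 1 = k - 2 := by ring
  have e5 : j + 1 + 1 = j + 2 := by ring
  have e6 : k - 1 + 1 = k := by ring
  rw [e3, e4, e5, e6]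
  have ha := hnz j k
  have hb := hnz (j + 1) (k - 1)
  field_simp
  linear_combination h2 - h1
end
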